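/- Let N ≥ 1 be an integer, let p > 1, and let Q : ℝ^N → ℝ be a positive Schwartz function solving ΔQ − Q + Q^p = 0 pointwise on ℝ^N, with Q not identically zero. Set ΛQ := (2/(p−1))Q + x·∇Q, κ := (∫ ΛQ · Q dx)/(∫ Q² dx), and Z := ΛQ − κ Q. Then ∫_{ℝ^N} ( |∇Z|² + Z² − p Q^{p−1} Z² ) dx = −(N²(p−1)/(4(p+1))) · ( p − (1 + 4/N) ) · ∫_{ℝ^N} Q^{p+1} dx. In particular, if p > 1 + 4/N this quantity is strictly negative. -/

import Mathlib

open MeasureTheory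

/-- The Laplacian of `f : ℝ^N → ℝ`, as the sum of the second partial derivatives. -/
noncomputable def lap {N : ℕ} (f : EuclideanSpace ℝ (Fin N) → ℝ)
    (x : EuclideanSpace ℝ (Fin N)) : ℝ :=
  ∑ i : Fin N,
    fderiv ℝ (fun y => fderiv ℝ f y (EuclideanSpace.single i 1)) x (EuclideanSpace.single i 1)

/-- The scaling generator `Λf = (2/(p-1)) f + x · ∇f`. -/
noncomputable def scalingGen {N : ℕ} (p : ℝ) (f : EuclideanSpace ℝ (Fin N) → ℝ)
    (x : EuclideanSpace ℝ (Fin N)) : ℝ :=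
  2 / (p - 1) * f x + ∑ i : Fin N, x i * fderiv ℝ f x (EuclideanSpace.single i 1)

/-!
Write `x · ∇` for the Euler operator. The commutator identity `Δ (x · ∇f) = 2 Δf + x · ∇(Δf)`
together with `ΔQ = Q - Q^p` gives, pointwise,
`L₊ (a Q + x · ∇Q) = (2 + a (1 - p)) Q^p - 2 Q`,
while integrating `x_i ∂_i (Q^r)` by parts gives
`∫ (a Q + x · ∇Q) Q^(r-1) = (a - N / r) ∫ Q^r`.
Hence `κ = 2/(p-1) - N/2`, so `Z = (N/2) Q + x · ∇Q`, and `(L₊Z, Z) = ∫ Z L₊Z` collapses to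
`(2 - N(p-1)/2) (N/2 - N/(p+1)) ∫ Q^(p+1)` because `∫ Z Q = 0`.
-/

open LineDeriv Laplacian
open scoped InnerProductSpace

namespace SchwartzMap

variable {E F : Type*} [NormedAddCommGroup E] [NormedAddCommGroup F] [NormedSpace ℝ F]

theorem lineDerivOp_comm [NormedSpace ℝ E] (f : 𝓢(E, F)) (v w : E) :
    ∂_{v} (∂_{w} f) = ∂_{w} (∂_{v} f) := by
  ext x
  have hsymm := ((f.smooth 2).contDiffAt (x := x)).isSymmSndFDerivAt (by simp)
  have key (a b : E) : ∂_{a} (∂_{b} f) x = iteratedFDeriv ℝ 2 f x ![a, b] := by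
    rw [← iteratedLineDerivOp_eq_iteratedFDeriv]
    simp [iteratedLineDerivOp_succ_left]
  rw [key, key, hsymm.iteratedFDeriv_cons]

theorem hasFDerivAt_rpow [NormedSpace ℝ E] {Q : 𝓢(E, ℝ)} (hQpos : ∀ x, 0 < Q x) (r : ℝ) (x : E) :
    HasFDerivAt (fun y => Q y ^ r) ((r * Q x ^ (r - 1)) • fderiv ℝ Q x) x :=
  (Q.hasFDerivAt x).rpow_const (Or.inl (hQpos x).ne')

variable [InnerProductSpace ℝ E]

theorem lineDerivOp_smulLeftCLM_inner (c v : E) (f : 𝓢(E, F)) :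
    ∂_{v} (smulLeftCLM F (⟪·, c⟫_ℝ) f) = ⟪v, c⟫_ℝ • f + smulLeftCLM F (⟪·, c⟫_ℝ) (∂_{v} f) := by
  have hc := Function.hasTemperateGrowth_inner_left c
  have hℓ (x : E) : HasFDerivAt (⟪·, c⟫_ℝ) ((innerSL ℝ).flip c) x :=
    ((innerSL ℝ).flip c).hasFDerivAt
  ext x
  simp only [lineDerivOp_apply_eq_fderiv, add_apply, smul_apply, smulLeftCLM_apply_apply hc]
  rw [smulLeftCLM_apply hc, fderiv_fun_smul (hℓ x).differentiableAt f.differentiableAt,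
    (hℓ x).fderiv]
  simp only [add_apply, smul_apply, ContinuousLinearMap.smulRight_apply,
    ContinuousLinearMap.flip_apply, innerSL_apply_apply]
  rw [add_comm]

variable {ι : Type*} [Fintype ι]

noncomputable def euler (b : OrthonormalBasis ι ℝ E) (f : 𝓢(E, F)) : 𝓢(E, F) :=
  ∑ i, smulLeftCLM F (⟪·, b i⟫_ℝ) (∂_{b i} f)

theorem euler_apply (b : OrthonormalBasis ι ℝ E) (f : 𝓢(E, F)) (x : E) :
    euler b f x = ∑ i, ⟪x, b i⟫_ℝ • fderiv ℝ f x (b i) := by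
  simp [euler, sum_apply, Function.hasTemperateGrowth_inner_left, lineDerivOp_apply_eq_fderiv]

variable [FiniteDimensional ℝ E]

theorem laplacian_lineDerivOp (f : 𝓢(E, F)) (v : E) : Δ (∂_{v} f) = ∂_{v} (Δ f) := by
  simp only [laplacian_eq_sum (stdOrthonormalBasis ℝ E), lineDerivOp_sum, lineDerivOp_comm _ v]

theorem laplacian_smulLeftCLM_inner (c : E) (f : 𝓢(E, F)) :
    Δ (smulLeftCLM F (⟪·, c⟫_ℝ) f) = (2 : ℝ) • ∂_{c} f + smulLeftCLM F (⟪·, c⟫_ℝ) (Δ f) := by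
  let b := stdOrthonormalBasis ℝ E
  have hc : ∑ i, ⟪b i, c⟫_ℝ • ∂_{b i} f = ∂_{c} f := by
    simp only [← lineDerivOp_left_smul, ← lineDerivOp_left_sum, b.sum_repr']
  simp only [laplacian_eq_sum b, lineDerivOp_smulLeftCLM_inner, lineDerivOp_add, lineDerivOp_smul,
    map_sum, Finset.sum_add_distrib, hc]
  module

theorem laplacian_euler (b : OrthonormalBasis ι ℝ E) (f : 𝓢(E, F)) :
    Δ (euler b f) = (2 : ℝ) • Δ f + euler b (Δ f) := by
  rw [euler, ← laplacianCLM_eq ℝ, map_sum]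
  simp only [laplacianCLM_eq, laplacian_smulLeftCLM_inner, laplacian_lineDerivOp]
  rw [Finset.sum_add_distrib, ← Finset.smul_sum, ← laplacian_eq_sum b, euler]

theorem norm_gradient_sq (b : OrthonormalBasis ι ℝ E) (f : 𝓢(E, ℝ)) (x : E) :
    ‖gradient f x‖ ^ 2 = ∑ i, ∂_{b i} f x ^ 2 := by
  simp [← b.sum_sq_inner_left, inner_gradient_left, lineDerivOp_apply_eq_fderiv]

variable [MeasurableSpace E] [BorelSpace E] {μ : Measure E} [μ.IsAddHaarMeasure]

theorem integrable_mul (f g : 𝓢(E, ℝ)) : Integrable (fun x => f x * g x) μ :=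
  (pairing (ContinuousLinearMap.mul ℝ ℝ) f g).integrable

theorem integral_norm_gradient_sq (f : 𝓢(E, ℝ)) :
    ∫ x, ‖gradient f x‖ ^ 2 ∂μ = -∫ x, f x * Δ f x ∂μ := by
  let b := stdOrthonormalBasis ℝ E
  simp only [norm_gradient_sq b, laplacian_eq_sum b, sum_apply, Finset.mul_sum, sq]
  rw [integral_finsetSum _ fun i _ => integrable_mul _ _,
    integral_finsetSum _ fun i _ => integrable_mul _ _, ← Finset.sum_neg_distrib]
  simp only [integral_mul_lineDerivOp_right_eq_neg_left, neg_neg]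

end SchwartzMap

theorem Real.rpow_sub_one_mul_self {x : ℝ} (hx : x ≠ 0) (r : ℝ) : x ^ (r - 1) * x = x ^ r := by
  rw [← Real.rpow_add_one hx, sub_add_cancel]

section GroundState

open SchwartzMap

variable {E : Type*} [NormedAddCommGroup E] [InnerProductSpace ℝ E] [FiniteDimensional ℝ E]
  {ι : Type*} [Fintype ι] (b : OrthonormalBasis ι ℝ E) {p : ℝ} {Q : 𝓢(E, ℝ)}

noncomputable def Lplus (p : ℝ) (Q f : 𝓢(E, ℝ)) (x : E) : ℝ :=
  f x - Δ f x - p * Q x ^ (p - 1) * f x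

theorem euler_laplacian_apply (hQpos : ∀ x, 0 < Q x)
    (hQ : ∀ x, Δ Q x = Q x - Q x ^ p) (x : E) :
    euler b (Δ Q) x = (1 - p * Q x ^ (p - 1)) * euler b Q x := by
  have hΔQ : ⇑(Δ Q : 𝓢(E, ℝ)) = fun y => Q y - Q y ^ p := funext hQ
  have hd := (Q.hasFDerivAt x).fun_sub (hasFDerivAt_rpow hQpos p x)
  rw [euler_apply, euler_apply, hΔQ, hd.fderiv, Finset.mul_sum]
  refine Finset.sum_congr rfl fun i _ => ?_
  simp only [sub_apply, smul_apply, smul_eq_mul]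
  ring

theorem Lplus_smul_add_euler (hQpos : ∀ x, 0 < Q x) (hQ : ∀ x, Δ Q x = Q x - Q x ^ p)
    (a : ℝ) (x : E) :
    Lplus p Q (a • Q + euler b Q) x = (2 + a * (1 - p)) * Q x ^ p - 2 * Q x := by
  have hΔ : Δ (a • Q + euler b Q) = a • Δ Q + ((2 : ℝ) • Δ Q + euler b (Δ Q)) := by
    rw [← laplacianCLM_eq ℝ, map_add, map_smul, laplacianCLM_eq, laplacianCLM_eq, laplacian_euler]
  simp only [Lplus, hΔ, add_apply, smul_apply, smul_eq_mul,
    euler_laplacian_apply b hQpos hQ, hQ]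
  rw [← Real.rpow_sub_one_mul_self (hQpos x).ne' p]
  ring

variable [MeasurableSpace E] [BorelSpace E] {μ : Measure E} [μ.IsAddHaarMeasure]

theorem integrable_rpow_mul (hQpos : ∀ x, 0 < Q x) {r : ℝ} (hr : 0 ≤ r) (f : 𝓢(E, ℝ)) :
    Integrable (fun x => Q x ^ r * f x) μ := by
  refine f.integrable.bdd_mul (c := (SchwartzMap.seminorm ℝ 0 0 Q) ^ r)
    (Q.continuous.rpow_const fun x => Or.inl (hQpos x).ne').aestronglyMeasurable
    (ae_of_all _ fun x => ?_)
  rw [Real.norm_eq_abs, abs_of_nonneg (Real.rpow_nonneg (hQpos x).le r)]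
  exact Real.rpow_le_rpow (hQpos x).le ((le_abs_self _).trans (norm_le_seminorm ℝ Q x)) hr

theorem integral_inner_mul_fderiv (c v : E) {g : E → ℝ} (hg : Differentiable ℝ g)
    (hg_int : Integrable g μ) (hcg : Integrable (fun x => ⟪x, c⟫_ℝ * g x) μ)
    (hcg' : Integrable (fun x => ⟪x, c⟫_ℝ * fderiv ℝ g x v) μ) :
    ∫ x, ⟪x, c⟫_ℝ * fderiv ℝ g x v ∂μ = -⟪v, c⟫_ℝ * ∫ x, g x ∂μ := by
  have hℓ (x : E) : HasFDerivAt (⟪·, c⟫_ℝ) ((innerSL ℝ).flip c) x :=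
    ((innerSL ℝ).flip c).hasFDerivAt
  have hℓv (x : E) : fderiv ℝ (⟪·, c⟫_ℝ) x v = ⟪v, c⟫_ℝ := by
    rw [(hℓ x).fderiv, ContinuousLinearMap.flip_apply, innerSL_apply_apply, real_inner_comm]
  rw [integral_mul_fderiv_eq_neg_fderiv_mul_of_integrable (by simpa [hℓv] using hg_int.const_mul _)
    hcg' hcg (fun x _ => (hℓ x).differentiableAt) (fun x _ => hg x)]
  simp [hℓv, integral_const_mul]

theorem integrable_rpow (hQpos : ∀ x, 0 < Q x) {r : ℝ} (hr : 1 ≤ r) :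
    Integrable (fun x => Q x ^ r) μ :=
  (integrable_rpow_mul hQpos (sub_nonneg.2 hr) Q).congr
    (ae_of_all _ fun x => Real.rpow_sub_one_mul_self (hQpos x).ne' r)

theorem integrable_inner_mul_fderiv_rpow (hQpos : ∀ x, 0 < Q x) {r : ℝ} (hr : 1 ≤ r) (c v : E) :
    Integrable (fun x => ⟪x, c⟫_ℝ * fderiv ℝ (fun y => Q y ^ r) x v) μ := by
  have hc := Function.hasTemperateGrowth_inner_left c
  refine ((integrable_rpow_mul hQpos (sub_nonneg.2 hr)
    (smulLeftCLM ℝ (⟪·, c⟫_ℝ) (∂_{v} Q))).const_mul r).congr (ae_of_all _ fun x => ?_)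
  simp only [smulLeftCLM_apply_apply hc, smul_eq_mul, (hasFDerivAt_rpow hQpos r x).fderiv,
    smul_apply, lineDerivOp_apply_eq_fderiv]
  ring

theorem integral_inner_mul_fderiv_rpow (hQpos : ∀ x, 0 < Q x) {r : ℝ} (hr : 1 ≤ r) (c v : E) :
    ∫ x, ⟪x, c⟫_ℝ * fderiv ℝ (fun y => Q y ^ r) x v ∂μ = -⟪v, c⟫_ℝ * ∫ x, Q x ^ r ∂μ := by
  have hc := Function.hasTemperateGrowth_inner_left c
  refine integral_inner_mul_fderiv c v (fun x => (hasFDerivAt_rpow hQpos r x).differentiableAt)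
    (integrable_rpow hQpos hr) ?_ (integrable_inner_mul_fderiv_rpow hQpos hr c v)
  refine (integrable_rpow_mul hQpos (sub_nonneg.2 hr) (smulLeftCLM ℝ (⟪·, c⟫_ℝ) Q)).congr
    (ae_of_all _ fun x => ?_)
  simp only [smulLeftCLM_apply_apply hc, smul_eq_mul]
  rw [← Real.rpow_sub_one_mul_self (hQpos x).ne' r]
  ring

theorem integral_euler_mul_rpow (hQpos : ∀ x, 0 < Q x) {r : ℝ} (hr : 1 ≤ r) :
    ∫ x, euler b Q x * Q x ^ (r - 1) ∂μ = -(Fintype.card ι / r) * ∫ x, Q x ^ r ∂μ := by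
  have hr0 : r ≠ 0 := by positivity
  have hpt (x : E) : euler b Q x * Q x ^ (r - 1)
      = ∑ i, r⁻¹ * (⟪x, b i⟫_ℝ * fderiv ℝ (fun y => Q y ^ r) x (b i)) := by
    simp only [euler_apply, (hasFDerivAt_rpow hQpos r x).fderiv, Finset.sum_mul, smul_apply,
      smul_eq_mul]
    refine Finset.sum_congr rfl fun i _ => ?_
    field_simp
  simp only [hpt]
  rw [integral_finsetSum _ fun i _ => (integrable_inner_mul_fderiv_rpow hQpos hr _ _).const_mul _]
  simp only [integral_const_mul, integral_inner_mul_fderiv_rpow hQpos hr,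
    real_inner_self_eq_norm_sq, b.orthonormal.1 _, Finset.sum_const, Finset.card_univ, nsmul_eq_mul]
  field_simp

theorem integral_smul_add_euler_mul_rpow (hQpos : ∀ x, 0 < Q x) {r : ℝ} (hr : 1 ≤ r) (a : ℝ) :
    ∫ x, (a • Q + euler b Q) x * Q x ^ (r - 1) ∂μ
      = (a - Fintype.card ι / r) * ∫ x, Q x ^ r ∂μ := by
  have hs : 0 ≤ r - 1 := by linarith
  simp only [add_apply, smul_apply, smul_eq_mul, add_mul]
  rw [integral_add, integral_euler_mul_rpow b hQpos hr]
  · simp only [mul_assoc, ← Real.rpow_sub_one_mul_self (hQpos _).ne' r, mul_comm (Q _),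
      integral_const_mul]
    ring
  · simpa only [mul_assoc, mul_comm (Q _)] using (integrable_rpow_mul hQpos hs Q).const_mul a
  · simpa only [mul_comm (euler b Q _)] using integrable_rpow_mul hQpos hs (euler b Q)

theorem integral_rpow_pos (hQpos : ∀ x, 0 < Q x) {r : ℝ} (hr : 1 ≤ r) :
    0 < ∫ x, Q x ^ r ∂μ := by
  rw [integral_pos_iff_support_of_nonneg (fun x => (Real.rpow_pos_of_pos (hQpos x) r).le)
    (integrable_rpow hQpos hr)]
  have hsupp : Function.support (fun x => Q x ^ r) = Set.univ :=
    Function.support_eq_univ fun x => (Real.rpow_pos_of_pos (hQpos x) r).ne'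
  rw [hsupp]
  exact isOpen_univ.measure_pos μ Set.univ_nonempty

theorem integral_quadForm_eq_integral_mul_Lplus (hQpos : ∀ x, 0 < Q x) (hp : 1 ≤ p)
    (f : 𝓢(E, ℝ)) :
    ∫ x, (‖gradient f x‖ ^ 2 + f x ^ 2 - p * Q x ^ (p - 1) * f x ^ 2) ∂μ
      = ∫ x, f x * Lplus p Q f x ∂μ := by
  have hgrad : Integrable (fun x => ‖gradient f x‖ ^ 2) μ := by
    simp only [norm_gradient_sq (stdOrthonormalBasis ℝ E), sq]
    exact integrable_finsetSum _ fun i _ => integrable_mul _ _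
  have hsq : Integrable (fun x => f x ^ 2) μ := by simpa only [sq] using integrable_mul f f
  have hpot : Integrable (fun x => p * Q x ^ (p - 1) * f x ^ 2) μ := by
    simpa only [mul_assoc, sq, pairing_apply_apply, ContinuousLinearMap.mul_apply'] using
      (integrable_rpow_mul hQpos (sub_nonneg.2 hp)
      (pairing (ContinuousLinearMap.mul ℝ ℝ) f f)).const_mul p
  have hlap : Integrable (fun x => f x * Δ f x) μ := integrable_mul f (Δ f)
  calc ∫ x, (‖gradient f x‖ ^ 2 + f x ^ 2 - p * Q x ^ (p - 1) * f x ^ 2) ∂μ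
      = ∫ x, ‖gradient f x‖ ^ 2 ∂μ + ∫ x, f x ^ 2 ∂μ - ∫ x, p * Q x ^ (p - 1) * f x ^ 2 ∂μ := by
        rw [integral_sub (hgrad.fun_add hsq) hpot, integral_add hgrad hsq]
    _ = ∫ x, (f x ^ 2 - f x * Δ f x - p * Q x ^ (p - 1) * f x ^ 2) ∂μ := by
        rw [integral_sub (hsq.sub' hlap) hpot, integral_sub hsq hlap, integral_norm_gradient_sq]
        ring
    _ = ∫ x, f x * Lplus p Q f x ∂μ := integral_congr_ae (ae_of_all _ fun x => by
        simp only [Lplus]; ring)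

theorem integral_smul_add_euler_mul_self (hQpos : ∀ x, 0 < Q x) (a : ℝ) :
    ∫ x, (a • Q + euler b Q) x * Q x ∂μ = (a - Fintype.card ι / 2) * ∫ x, Q x ^ 2 ∂μ := by
  have h := integral_smul_add_euler_mul_rpow b (μ := μ) hQpos one_le_two a
  rw [show (2 : ℝ) - 1 = 1 by norm_num] at h
  simpa only [Real.rpow_one, Real.rpow_two] using h

theorem integral_mul_Lplus_smul_add_euler (hQpos : ∀ x, 0 < Q x) (hp : 1 ≤ p)
    (hQ : ∀ x, Δ Q x = Q x - Q x ^ p) (a : ℝ) :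
    ∫ x, (a • Q + euler b Q) x * Lplus p Q (a • Q + euler b Q) x ∂μ
      = (2 + a * (1 - p)) * (a - Fintype.card ι / (p + 1)) * ∫ x, Q x ^ (p + 1) ∂μ
        - 2 * (a - Fintype.card ι / 2) * ∫ x, Q x ^ 2 ∂μ := by
  have hL (x : E) : (a • Q + euler b Q) x * Lplus p Q (a • Q + euler b Q) x
      = (2 + a * (1 - p)) * ((a • Q + euler b Q) x * Q x ^ p)
        - 2 * ((a • Q + euler b Q) x * Q x) := by
    rw [Lplus_smul_add_euler b hQpos hQ]; ring
  have hQp := integral_smul_add_euler_mul_rpow b (μ := μ) hQpos (r := p + 1) (by linarith) a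
  rw [add_sub_cancel_right] at hQp
  have hint : Integrable (fun x => (a • Q + euler b Q) x * Q x ^ p) μ := by
    simpa only [mul_comm (Q _ ^ p)] using integrable_rpow_mul (μ := μ) hQpos (r := p) (by linarith)
      (a • Q + euler b Q)
  simp only [hL]
  rw [integral_sub (hint.const_mul _) ((integrable_mul _ Q).const_mul _), integral_const_mul,
    integral_const_mul, hQp, integral_smul_add_euler_mul_self b hQpos]
  ring

end GroundState

section Euclidean

open SchwartzMap

variable {N : ℕ}

theorem lap_eq_laplacian (f : 𝓢(EuclideanSpace ℝ (Fin N), ℝ)) :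
    lap ⇑f = ⇑(Δ f : 𝓢(EuclideanSpace ℝ (Fin N), ℝ)) := by
  funext x
  simp only [lap, laplacian_eq_sum (EuclideanSpace.basisFun (Fin N) ℝ),
    EuclideanSpace.basisFun_apply, sum_apply, lineDerivOp_apply_eq_fderiv]
  rfl

theorem scalingGen_eq (p : ℝ) (f : 𝓢(EuclideanSpace ℝ (Fin N), ℝ)) :
    scalingGen p ⇑f = ⇑((2 / (p - 1)) • f + euler (EuclideanSpace.basisFun (Fin N) ℝ) f) := by
  funext x
  simp [scalingGen, euler_apply, EuclideanSpace.inner_single_right]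

end Euclidean

theorem Lplus_negative_direction_general (N : ℕ) (hN : 1 ≤ N) (p : ℝ) (hp : 1 < p)
    (Q : SchwartzMap (EuclideanSpace ℝ (Fin N)) ℝ)
    (hQpos : ∀ x, 0 < Q x)
    (hQ : ∀ x, lap (⇑Q) x - Q x + Q x ^ p = 0) :
    let Λ : EuclideanSpace ℝ (Fin N) → ℝ := scalingGen p (⇑Q)
    let κ : ℝ := (∫ x, Λ x * Q x) / (∫ x, (Q x) ^ 2)
    let Z : EuclideanSpace ℝ (Fin N) → ℝ := fun x => Λ x - κ * Q x
    (∫ x, (‖gradient Z x‖ ^ 2 + (Z x) ^ 2 - p * Q x ^ (p - 1) * (Z x) ^ 2))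
        = -((N : ℝ) ^ 2 * (p - 1) / (4 * (p + 1))) * (p - (1 + 4 / (N : ℝ)))
          * ∫ x, Q x ^ (p + 1)
      ∧ (1 + 4 / (N : ℝ) < p →
        (∫ x, (‖gradient Z x‖ ^ 2 + (Z x) ^ 2 - p * Q x ^ (p - 1) * (Z x) ^ 2)) < 0) := by
  intro Λ κ Z
  set b := EuclideanSpace.basisFun (Fin N) ℝ
  have hN₀ : (0 : ℝ) < N := by exact_mod_cast hN
  have hQΔ (x : EuclideanSpace ℝ (Fin N)) : Δ Q x = Q x - Q x ^ p := by
    rw [← lap_eq_laplacian]; linarith [hQ x]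
  have hΛ : Λ = ⇑((2 / (p - 1)) • Q + SchwartzMap.euler b Q) := scalingGen_eq p Q
  have hκ : κ = 2 / (p - 1) - N / 2 := by
    have hpos : 0 < ∫ x, Q x ^ 2 := by
      simpa only [Real.rpow_two] using integral_rpow_pos (μ := volume) hQpos one_le_two
    simp only [κ, hΛ, integral_smul_add_euler_mul_self b hQpos, Fintype.card_fin]
    field_simp
  have hZ : Z = ⇑(((N : ℝ) / 2) • Q + SchwartzMap.euler b Q) := by
    funext x
    simp only [Z, hΛ, hκ, add_apply, smul_apply, smul_eq_mul]
    ring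
  have hQF : ∫ x, (‖gradient Z x‖ ^ 2 + Z x ^ 2 - p * Q x ^ (p - 1) * Z x ^ 2)
      = -((N : ℝ) ^ 2 * (p - 1) / (4 * (p + 1))) * (p - (1 + 4 / (N : ℝ)))
          * ∫ x, Q x ^ (p + 1) := by
    rw [hZ, integral_quadForm_eq_integral_mul_Lplus hQpos hp.le,
      integral_mul_Lplus_smul_add_euler b hQpos hp.le hQΔ, Fintype.card_fin]
    field_simp
    ring
  refine ⟨hQF, fun hcrit => ?_⟩
  rw [hQF]
  have hcoef : 0 < (N : ℝ) ^ 2 * (p - 1) / (4 * (p + 1)) := by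
    have : 0 < p - 1 := by linarith
    positivity
  exact mul_neg_of_neg_of_pos (mul_neg_of_neg_of_pos (neg_neg_of_pos hcoef) (by linarith))
    (integral_rpow_pos hQpos (by linarith))

/-- Negative direction for the linearized operator `L₊ = 1 - Δ - pQ^(p-1)` on `{Q}^⊥`:
with `Z` the component of `ΛQ` orthogonal to `Q` in `L²`, one has
`(L₊Z, Z) = -(N²(p-1)/(4(p+1)))(p - (1 + 4/N)) ∫ Q^(p+1)`, which is negative for
`p > 1 + 4/N`. -/
theorem Lplus_negative_direction (N : ℕ) (hN : 1 ≤ N) (p : ℝ) (hp : 1 < p)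
    (Q : SchwartzMap (EuclideanSpace ℝ (Fin N)) ℝ)
    (hQpos : ∀ x, 0 < Q x)
    (hQne : ∃ x, Q x ≠ 0)
    (hQ : ∀ x, lap (⇑Q) x - Q x + Q x ^ p = 0) :
    let Λ : EuclideanSpace ℝ (Fin N) → ℝ := scalingGen p (⇑Q)
    let κ : ℝ := (∫ x, Λ x * Q x) / (∫ x, (Q x) ^ 2)
    let Z : EuclideanSpace ℝ (Fin N) → ℝ := fun x => Λ x - κ * Q x
    (∫ x, (‖gradient Z x‖ ^ 2 + (Z x) ^ 2 - p * Q x ^ (p - 1) * (Z x) ^ 2))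
        = -((N : ℝ) ^ 2 * (p - 1) / (4 * (p + 1))) * (p - (1 + 4 / (N : ℝ)))
          * ∫ x, Q x ^ (p + 1)
      ∧ (1 + 4 / (N : ℝ) < p →
        (∫ x, (‖gradient Z x‖ ^ 2 + (Z x) ^ 2 - p * Q x ^ (p - 1) * (Z x) ^ 2)) < 0) :=
  Lplus_negative_direction_general N hN p hp Q hQpos hQ
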